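/- Let (X, X_+) be an ordered Banach space with X_+ ≠ {0} and let (T_t)_{t ∈ [0,∞)} be a positive operator semigroup on X. Assume: (a) for each nonzero x ∈ X_+ there exists a time t_x ∈ [0,∞) such that T_{t_x}x is an almost interior point of X_+; (b) the semigroup is bounded and strongly asymptotically compact. Then there exists a bounded linear operator Q on X such that T_t x → Qx in norm for every x ∈ X as t → ∞; moreover, if Q ≠ 0, then there exist an almost interior point y of X_+ with T_t y = y for all t ≥ 0 and a strictly positive functional y' ∈ X' with T_t' y' = y' for all t ≥ 0 (where T_t' denotes the adjoint of T_t), such that Qz = ⟨y', z⟩ y for all z ∈ X. -/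

import Mathlib

/-!
Along an idempotent ultrafilter `U ≤ atTop` on `ℝ`, strong asymptotic compactness makes every
`T (t - τ) x` converge; call the limits `S τ x` and `e = S 0`. Idempotency `U + U = U` makes `e` a
projection, it commutes with the semigroup, and `T t (x - e x) → 0` because the bounded semigroup
sends `x - e x` close to `0` at some time. Since `S τ ∘ T τ = e` with `S τ` positive, strong
positivity propagates to the range of `e`: each nonzero positive fixed vector of `e` is an almost
interior point. A closed pointed cone all of whose nonzero points are almost interior lies on a
half-line, for otherwise the Bishop–Phelps theorem produces a supporting functional vanishing at a
nonzero point of the cone. So `e = y' ⊗ u` and `T t u = r t • u` for a bounded multiplicative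
`r ≥ 0` with `1` as a cluster value at infinity, which forces `r = 1`.
-/

open Filter Topology Set

attribute [local instance] Ultrafilter.add Ultrafilter.addSemigroup

section BrondstedOrder

variable {α : Type*} [MetricSpace α] {S : Set α} {g : α → ℝ}

theorem exists_dist_le_sub_forall_dist_lt (hgS : BddAbove (g '' S)) {x : α} (hx : x ∈ S)
    {δ : ℝ} (hδ : 0 < δ) :
    ∃ y ∈ S, dist y x ≤ g y - g x ∧ ∀ v ∈ S, dist v y ≤ g v - g y → dist v y < δ := by
  set A := {v ∈ S | dist v x ≤ g v - g x}
  obtain ⟨_, ⟨y, ⟨hyS, hyx⟩, rfl⟩, hy⟩ := exists_lt_of_lt_csSup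
    (⟨g x, x, ⟨hx, by simp⟩, rfl⟩ : (g '' A).Nonempty) (sub_lt_self (sSup (g '' A)) hδ)
  refine ⟨y, hyS, hyx, fun v hv hvy => ?_⟩
  have hvx : dist v x ≤ g v - g x := by linarith [dist_triangle v y x]
  have := le_csSup (hgS.mono (image_mono (sep_subset _ _))) (⟨v, ⟨hv, hvx⟩, rfl⟩ : g v ∈ g '' A)
  linarith

/-- Ekeland's variational principle, in Brøndsted's order `v ≽ x ↔ dist v x ≤ g v - g x`. -/
theorem exists_maximal_dist_le_sub [CompleteSpace α] (hS : IsClosed S) (hg : Continuous g)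
    (hgS : BddAbove (g '' S)) {x₀ : α} (hx₀ : x₀ ∈ S) :
    ∃ m ∈ S, dist m x₀ ≤ g m - g x₀ ∧ ∀ v ∈ S, dist v m ≤ g v - g m → v = m := by
  let R : α → α → Prop := fun v x => dist v x ≤ g v - g x
  have R_trans {u v x : α} (huv : R u v) (hvx : R v x) : R u x := by
    simp only [R] at *
    linarith [dist_triangle u v x]
  choose! next hnextS hnextR hnext using fun x (hx : x ∈ S) (δ : ℝ) (hδ : 0 < δ) =>
    exists_dist_le_sub_forall_dist_lt hgS hx hδ
  let δ : ℕ → ℝ := fun n => 1 / (n + 1)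
  have hδ (n : ℕ) : 0 < δ n := Nat.one_div_pos_of_nat
  let x : ℕ → α := fun n => Nat.rec x₀ (fun n xn => next xn (δ n)) n
  have hxS (n : ℕ) : x n ∈ S := by
    induction n with
    | zero => exact hx₀
    | succ n ih => exact hnextS _ ih _ (hδ n)
  have hxR {n k : ℕ} (hnk : n ≤ k) : R (x k) (x n) := by
    induction k, hnk using Nat.le_induction with
    | base => simp [R]
    | succ k _ ih => exact R_trans (hnextR _ (hxS k) _ (hδ k)) ih
  have hx_close (n : ℕ) {v : α} (hv : v ∈ S) (hvx : R v (x (n + 1))) :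
      dist v (x (n + 1)) < δ n :=
    hnext _ (hxS n) _ (hδ n) v hv hvx
  obtain ⟨m, hm⟩ : ∃ m, Tendsto x atTop (𝓝 m) := by
    refine cauchySeq_tendsto_of_complete (Metric.cauchySeq_iff'.2 fun ε hε => ?_)
    obtain ⟨n, hn⟩ := exists_nat_one_div_lt hε
    exact ⟨n + 1, fun k hk => (hx_close n (hxS k) (hxR hk)).trans hn⟩
  have hmS : m ∈ S := hS.mem_of_tendsto hm (Eventually.of_forall hxS)
  have hmR (n : ℕ) : R m (x n) :=
    (isClosed_le (f := fun v => dist v (x n)) (g := fun v => g v - g (x n)) (by fun_prop)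
      (by fun_prop)).mem_of_tendsto hm ((eventually_ge_atTop n).mono fun k hk => hxR hk)
  refine ⟨m, hmS, hmR 0, fun v hv hvm => eq_of_forall_dist_le fun ε hε => ?_⟩
  obtain ⟨n, hn⟩ := exists_nat_one_div_lt (half_pos hε)
  have h₁ := hx_close n hv (R_trans hvm (hmR (n + 1)))
  have h₂ := hx_close n hmS (hmR (n + 1))
  linarith [dist_triangle_right v m (x (n + 1))]

end BrondstedOrder

section BishopPhelps

variable {E : Type*} [NormedAddCommGroup E] [NormedSpace ℝ E]

theorem exists_support_functional [CompleteSpace E] {S : Set E} (hS : IsClosed S)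
    (hSc : Convex ℝ S) (g : E →L[ℝ] ℝ) (hgS : BddAbove (g '' S)) {x₀ : E} (hx₀ : x₀ ∈ S) :
    ∃ m ∈ S, dist m x₀ ≤ g m - g x₀ ∧
      ∃ φ : E →L[ℝ] ℝ, (∀ v ∈ S, φ m ≤ φ v) ∧ ∀ k, ‖k‖ < g k → φ k < 0 := by
  obtain ⟨m, hmS, hmx, hmax⟩ := exists_maximal_dist_le_sub hS g.continuous hgS hx₀
  refine ⟨m, hmS, hmx, ?_⟩
  by_cases hk : ∃ k₀, ‖k₀‖ < g k₀
  swap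
  · simp only [not_exists, not_lt] at hk
    exact ⟨0, by simp, fun k h => absurd h (hk k).not_gt⟩
  obtain ⟨k₀, hk₀⟩ := hk
  -- the translate `m + {k | ‖k‖ < g k}` misses `S` by maximality of `m`
  let A : Set E := {x | ‖x - m‖ - g (x - m) < 0}
  have hAc : Convex ℝ A := by
    convert (((convexOn_norm convex_univ).sub
      (g.toLinearMap.concaveOn convex_univ)).translate_right (-m)).convex_lt 0 using 1
    ext x
    simp [A, sub_eq_add_neg, add_comm]
  have hAo : IsOpen A := isOpen_lt (by fun_prop) continuous_const
  have hAS : Disjoint A S := by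
    refine disjoint_left.2 fun x hxA hxS => ?_
    simp only [A, mem_ofPred_eq, map_sub] at hxA
    have hxm := hmax x hxS (by rw [dist_eq_norm]; linarith)
    simp [hxm] at hxA
  obtain ⟨φ, u, hφA, hφS⟩ := geometric_hahn_banach_open hAc hAo hSc hAS
  have hmem {k : E} (hk : ‖k‖ < g k) {t : ℝ} (ht : 0 < t) : m + t • k ∈ A := by
    simp only [A, mem_ofPred_eq, add_sub_cancel_left, norm_smul, map_smul, smul_eq_mul,
      Real.norm_of_nonneg ht.le]
    nlinarith
  have hneg {k : E} (hk : ‖k‖ < g k) : φ k < 0 := by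
    have := hφA _ (hmem hk one_pos)
    rw [one_smul, map_add] at this
    linarith [hφS m hmS]
  have hmu : φ m ≤ u := by
    by_contra! h
    have hk₀' := hneg hk₀
    have := hφA _ (hmem hk₀ (div_pos (sub_pos.2 h) (neg_pos.2 hk₀')))
    rw [map_add, map_smul, smul_eq_mul, div_mul_eq_mul_div, div_neg, mul_div_assoc,
      div_self hk₀'.ne] at this
    linarith
  exact ⟨φ, fun v hv => hmu.trans (hφS v hv), fun k hk => hneg hk⟩

/-- The exposed face `D ∩ ker φ` of `D` cut out by any `φ ≥ 0` on `D` is `{0}` or all of `D`. -/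
def NoProperExposedFace (D : Set E) : Prop :=
  ∀ φ : E →L[ℝ] ℝ, (∀ z ∈ D, 0 ≤ φ z) → ∀ v ∈ D, v ≠ 0 → φ v = 0 → ∀ z ∈ D, φ z = 0

variable {D : Set E}

theorem nonneg_of_forall_le_of_cone
    (hD : ∀ a b : ℝ, 0 ≤ a → 0 ≤ b → ∀ x ∈ D, ∀ y ∈ D, a • x + b • y ∈ D)
    {φ : E →L[ℝ] ℝ} {c : ℝ} (hc : ∀ v ∈ D, c ≤ φ v) {v : E} (hv : v ∈ D) : 0 ≤ φ v := by
  by_contra! hneg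
  have ht : 0 ≤ (|c| + 1) / -φ v := div_nonneg (by positivity) (neg_nonneg.2 hneg.le)
  have := hc _ (hD _ 0 ht le_rfl v hv v hv)
  rw [zero_smul, add_zero, map_smul, smul_eq_mul, div_neg, neg_mul,
    div_mul_cancel₀ _ hneg.ne] at this
  linarith [neg_abs_le c]

theorem exists_pos_functional_of_pointed (hDc : IsClosed D)
    (hD : ∀ a b : ℝ, 0 ≤ a → 0 ≤ b → ∀ x ∈ D, ∀ y ∈ D, a • x + b • y ∈ D)
    (hDp : ∀ x ∈ D, -x ∈ D → x = 0) {w : E} (hw : w ∈ D) (hw0 : w ≠ 0) :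
    ∃ f : E →L[ℝ] ℝ, (∀ v ∈ D, 0 ≤ f v) ∧ 0 < f w := by
  obtain ⟨f, u, hfD, hfw⟩ := geometric_hahn_banach_closed_point
    (fun x hx y hy a b ha hb _ => hD a b ha hb x hx y hy) hDc fun h => hw0 (hDp w hw h)
  have hu : 0 < u := by simpa using hfD 0 (by simpa using hD 0 0 le_rfl le_rfl w hw w hw)
  refine ⟨-f, fun v hv => nonneg_of_forall_le_of_cone hD (c := -u) (fun z hz => ?_) hv, ?_⟩
  · simpa using (hfD z hz).le
  · simpa using hu.trans hfw

theorem exists_norm_le_of_noProperExposedFace [CompleteSpace E] (hDc : IsClosed D)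
    (hD : ∀ a b : ℝ, 0 ≤ a → 0 ≤ b → ∀ x ∈ D, ∀ y ∈ D, a • x + b • y ∈ D)
    (hDp : ∀ x ∈ D, -x ∈ D → x = 0) (hDf : NoProperExposedFace D) :
    ∃ p : E →L[ℝ] ℝ, ∀ v ∈ D, ‖v‖ ≤ p v := by
  by_cases hD0 : ∃ w ∈ D, w ≠ 0
  swap
  · simp only [not_exists, not_and, not_not] at hD0
    exact ⟨0, fun v hv => by simp [hD0 v hv]⟩
  obtain ⟨w, hw, hw0⟩ := hD0
  have h0D : (0 : E) ∈ D := by simpa using hD 0 0 le_rfl le_rfl w hw w hw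
  obtain ⟨f, hf, hfw⟩ := exists_pos_functional_of_pointed hDc hD hDp hw hw0
  -- scaled so that `-w` lies in the Bishop–Phelps cone `‖k‖ < -p k`
  set p := ((‖w‖ + 1) / f w) • f with hp_def
  have hpw : p w = ‖w‖ + 1 := by simp [hp_def, div_mul_cancel₀ _ hfw.ne']
  have hp (v : E) (hv : v ∈ D) : 0 ≤ p v := by
    simp only [hp_def, smul_apply, smul_eq_mul]
    exact mul_nonneg (by positivity) (hf v hv)
  refine ⟨p, fun v hv => ?_⟩
  obtain ⟨m, hmD, hmv, φ, hφ, hφneg⟩ := exists_support_functional hDc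
    (fun x hx y hy a b ha hb _ => hD a b ha hb x hx y hy) (-p)
    ⟨0, by rintro _ ⟨z, hz, rfl⟩; simpa using hp z hz⟩ hv
  have hφpos (z : E) (hz : z ∈ D) : 0 ≤ φ z := nonneg_of_forall_le_of_cone hD hφ hz
  have hφw : 0 < φ w := by simpa using hφneg (-w) (by simp [hpw])
  have hm : m = 0 := by
    by_contra hm0
    have hφm : φ m = 0 := le_antisymm (by simpa using hφ 0 h0D) (hφpos m hmD)
    exact hφw.ne' (hDf φ hφpos m hmD hm0 hφm w hw)
  simpa [hm] using hmv

theorem subsingleton_base_of_noProperExposedFace [CompleteSpace E] (hDc : IsClosed D)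
    (hD : ∀ a b : ℝ, 0 ≤ a → 0 ≤ b → ∀ x ∈ D, ∀ y ∈ D, a • x + b • y ∈ D)
    (hDf : NoProperExposedFace D) {p : E →L[ℝ] ℝ} (hp : ∀ v ∈ D, ‖v‖ ≤ p v) :
    {z ∈ D | p z = 1}.Subsingleton := by
  intro b₁ hb₁ b₂ hb₂
  by_contra hne
  set B := {z ∈ D | p z = 1}
  have hBc : IsClosed B := hDc.inter (isClosed_eq p.continuous continuous_const)
  have hBconv : Convex ℝ B := fun x hx y hy a b ha hb hab =>
    ⟨hD a b ha hb x hx.1 y hy.1, by simp [hx.2, hy.2, hab]⟩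
  have hk0 : 0 < ‖b₂ - b₁‖ := norm_pos_iff.2 (sub_ne_zero.2 (Ne.symm hne))
  obtain ⟨h, hh, hk⟩ := exists_dual_vector ℝ (b₂ - b₁) hk0.ne'
  have hgB : BddAbove (((2 : ℝ) • h : E →L[ℝ] ℝ) '' B) := by
    refine ⟨2, ?_⟩
    rintro _ ⟨z, hz, rfl⟩
    have := (le_abs_self (h z)).trans (h.le_opNorm z)
    have := hp z hz.1
    simp only [smul_apply, smul_eq_mul, hh, hz.2] at *
    linarith
  obtain ⟨m, hmB, -, φ, hφ, hφneg⟩ := exists_support_functional hBc hBconv _ hgB hb₁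
  -- `φ` is minimal at `m` on the base, so `φ - φ m • p` supports `D` at the nonzero point `m`
  have hψ (z : E) (hz : z ∈ D) : 0 ≤ (φ - φ m • p) z := by
    rcases eq_or_ne z 0 with rfl | hz0
    · simp
    have hpz : 0 < p z := (norm_pos_iff.2 hz0).trans_le (hp z hz)
    have := hφ _ ⟨by simpa using hD (p z)⁻¹ 0 (by positivity) le_rfl z hz z hz,
      by simp [hpz.ne']⟩
    rw [map_smul, smul_eq_mul, le_inv_mul_iff₀ hpz] at this
    simp only [sub_apply, smul_apply, smul_eq_mul]
    linarith
  have hψD := hDf _ hψ m hmB.1 (by rintro rfl; simpa using hmB.2) (by simp [hmB.2])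
  have := hφneg (b₂ - b₁) (by simp [hk]; linarith)
  have h₁ := hψD b₁ hb₁.1
  have h₂ := hψD b₂ hb₂.1
  simp [hb₁.2, hb₂.2] at h₁ h₂ this
  linarith

theorem exists_eq_smul_of_noProperExposedFace [CompleteSpace E] (hDc : IsClosed D)
    (hD : ∀ a b : ℝ, 0 ≤ a → 0 ≤ b → ∀ x ∈ D, ∀ y ∈ D, a • x + b • y ∈ D)
    (hDp : ∀ x ∈ D, -x ∈ D → x = 0) (hDf : NoProperExposedFace D) {w : E} (hw : w ∈ D)
    (hw0 : w ≠ 0) {v : E} (hv : v ∈ D) : ∃ r : ℝ, v = r • w := by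
  obtain ⟨p, hp⟩ := exists_norm_le_of_noProperExposedFace hDc hD hDp hDf
  rcases eq_or_ne v 0 with rfl | hv0
  · exact ⟨0, by simp⟩
  have hpos {z : E} (hz : z ∈ D) (hz0 : z ≠ 0) : 0 < p z :=
    (norm_pos_iff.2 hz0).trans_le (hp z hz)
  have hbase {z : E} (hz : z ∈ D) (hz0 : z ≠ 0) : (p z)⁻¹ • z ∈ {z ∈ D | p z = 1} :=
    ⟨by simpa using hD (p z)⁻¹ 0 (inv_nonneg.2 (hpos hz hz0).le) le_rfl z hz z hz,
      by simp [(hpos hz hz0).ne']⟩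
  refine ⟨p v / p w, ?_⟩
  rw [div_eq_mul_inv, mul_smul,
    ← subsingleton_base_of_noProperExposedFace hDc hD hDf hp (hbase hv hv0) (hbase hw hw0),
    smul_inv_smul₀ (hpos hv hv0).ne']

end BishopPhelps

theorem exists_idempotent_ultrafilter_le_atTop {G : Type*} [AddCommGroup G] [LinearOrder G]
    [IsOrderedAddMonoid G] [Nonempty G] :
    ∃ U : Ultrafilter G, (U : Filter G) ≤ atTop ∧ U + U = U := by
  have hs : {U : Ultrafilter G | (U : Filter G) ≤ atTop} = ⋂ a, {U | Ici a ∈ U} := by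
    ext U
    simp [atTop_basis.ge_iff]
  refine exists_idempotent_in_compact_add_subsemigroup Ultrafilter.continuous_add_left
    {U : Ultrafilter G | (U : Filter G) ≤ atTop} (Ultrafilter.exists_le atTop)
    (by rw [hs]; exact (isClosed_iInter fun a => ultrafilter_isClosed_basic _).isCompact)
    fun U hU V hV => ?_
  refine atTop_basis.ge_iff.2 fun a _ => (Ultrafilter.eventually_add U V (· ∈ Ici a)).2 ?_
  exact Eventually.of_forall fun m => ((eventually_ge_atTop (a - m)).filter_mono hV).mono
    fun m' hm' => sub_le_iff_le_add'.1 hm'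

theorem exists_tendsto_ultrafilter_of_forall_subseq {X : Type*} [MetricSpace X] [CompleteSpace X]
    {f : ℝ → X} {a : ℝ}
    (hf : ∀ t : ℕ → ℝ, (∀ n, a ≤ t n) → Tendsto t atTop atTop →
      ∃ φ : ℕ → ℕ, StrictMono φ ∧ ∃ y, Tendsto (fun n => f (t (φ n))) atTop (𝓝 y))
    {U : Ultrafilter ℝ} (hU : (U : Filter ℝ) ≤ atTop) : ∃ y, Tendsto f U (𝓝 y) := by
  by_contra! h
  obtain ⟨ε, hε, hU_sep⟩ : ∃ ε > 0, ∀ s ∈ map f U, ∃ x ∈ s, ∃ y ∈ s, ε ≤ dist x y := by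
    by_contra! H
    obtain ⟨y, hy⟩ := CompleteSpace.complete (Metric.cauchy_iff.2 ⟨inferInstance, H⟩)
    exact h y hy
  have hfar (y : X) : ∀ᶠ s in U, ε / 2 ≤ dist (f s) y := by
    by_contra hy
    rw [← Ultrafilter.eventually_not] at hy
    obtain ⟨x, hx, z, hz, hxz⟩ := hU_sep (Metric.ball y (ε / 2))
      (hy.mono fun s hs => Metric.mem_ball.2 (not_le.1 hs))
    linarith [dist_triangle_right x z y, Metric.mem_ball.1 hx, Metric.mem_ball.1 hz]
  -- times tending to infinity along which `f` is `ε / 2`-separated: no Cauchy subsequence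
  obtain ⟨t, hta, ht⟩ := exists_seq_of_forall_finset_exists (fun s => a ≤ s)
    (fun s s' => s + 1 ≤ s' ∧ ε / 2 ≤ dist (f s') (f s)) fun F _ =>
      (((eventually_ge_atTop a).filter_mono hU).and ((F.eventually_all.2 fun s _ =>
        (eventually_ge_atTop (s + 1)).filter_mono hU).and
        (F.eventually_all.2 fun s _ => hfar (f s)))).exists.imp fun s' hs' =>
          ⟨hs'.1, fun s hs => ⟨hs'.2.1 s hs, hs'.2.2 s hs⟩⟩
  have ht_ge (n : ℕ) : t 0 + n ≤ t n := by
    induction n with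
    | zero => simp
    | succ n ih => push_cast; linarith [(ht n (n + 1) n.lt_succ_self).1]
  obtain ⟨φ, hφ, y, hy⟩ := hf t hta
    (tendsto_atTop_mono ht_ge (tendsto_atTop_add_const_left _ _ tendsto_natCast_atTop_atTop))
  obtain ⟨N, hN⟩ := Metric.cauchySeq_iff'.1 hy.cauchySeq (ε / 2) (half_pos hε)
  exact (hN (N + 1) N.le_succ).not_ge (ht _ _ (hφ N.lt_succ_self)).2

theorem exists_tendsto_clm_of_eventually_norm_le {𝕜 E F ι : Type*} [NontriviallyNormedField 𝕜]
    [NormedAddCommGroup E] [NormedSpace 𝕜 E] [NormedAddCommGroup F] [NormedSpace 𝕜 F]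
    {l : Filter ι} [l.NeBot] {A : ι → E →L[𝕜] F} {M : ℝ} (hA : ∀ᶠ i in l, ‖A i‖ ≤ M)
    (h : ∀ x, ∃ y, Tendsto (fun i => A i x) l (𝓝 y)) :
    ∃ L : E →L[𝕜] F, ∀ x, Tendsto (fun i => A i x) l (𝓝 (L x)) := by
  choose f hf using h
  let L := linearMapOfTendsto f (fun i => (A i : E →ₗ[𝕜] F)) (tendsto_pi_nhds.2 hf)
  exact ⟨L.mkContinuous M fun x => le_of_tendsto (hf x).norm
    (hA.mono fun i hi => (A i).le_of_opNorm_le hi x), hf⟩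

theorem eq_one_of_map_add_eq_mul {r : ℝ → ℝ}
    (hr : ∀ s t, 0 ≤ s → 0 ≤ t → r (s + t) = r s * r t) (hr0 : ∀ t, 0 ≤ t → 0 ≤ r t)
    {M : ℝ} (hM : ∀ t, 0 ≤ t → r t ≤ M) (h1 : MapClusterPt 1 atTop r) {t : ℝ} (ht : 0 ≤ t) :
    r t = 1 := by
  have hle {t : ℝ} (ht : 0 ≤ t) : r t ≤ 1 := by
    by_contra! h
    have hpow (n : ℕ) : r t ^ (n + 1) = r ((n + 1) * t) := by
      induction n with
      | zero => simp
      | succ n ih =>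
        rw [pow_succ, ih, ← hr _ _ (by positivity) ht]
        push_cast
        ring_nf
    obtain ⟨n, hn⟩ := (((tendsto_pow_atTop_atTop_of_one_lt h).comp
      (tendsto_add_atTop_nat 1)).eventually_gt_atTop M).exists
    rw [Function.comp_apply, hpow] at hn
    exact (hM _ (by positivity)).not_gt hn
  refine le_antisymm (hle ht) (not_lt.1 fun h => ?_)
  -- `r` is nonincreasing from `t` on, so it cannot come back close to `1`
  obtain ⟨s, hs, hst⟩ := ((mapClusterPt_iff_frequently.1 h1 _ (Ioi_mem_nhds h)).and_eventually
    (eventually_ge_atTop t)).exists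
  have := hr t (s - t) ht (sub_nonneg.2 hst)
  rw [add_sub_cancel] at this
  nlinarith [hle (sub_nonneg.2 hst), hr0 t ht, mem_Ioi.1 hs]

section Semigroup

variable {X : Type*} [NormedAddCommGroup X] [NormedSpace ℝ X] {T : ℝ → X →L[ℝ] X}
  {U : Ultrafilter ℝ}

theorem semigroup_apply_apply (hT : ∀ s t : ℝ, 0 ≤ s → 0 ≤ t → T (s + t) = (T s).comp (T t))
    {s t : ℝ} (hs : 0 ≤ s) (ht : 0 ≤ t) (x : X) : T s (T t x) = T (s + t) x := by
  rw [hT s t hs ht, ContinuousLinearMap.comp_apply]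

theorem tendsto_apply_of_tendsto_apply_sub {x y : X} (hy : ∀ t, 0 ≤ t → T t y = y)
    (h : Tendsto (fun t => T t (x - y)) atTop (𝓝 0)) : Tendsto (fun t => T t x) atTop (𝓝 y) := by
  refine (by simpa using tendsto_const_nhds.add h :
    Tendsto (fun t => y + T t (x - y)) atTop (𝓝 y)).congr' ?_
  filter_upwards [eventually_ge_atTop 0] with t ht
  rw [map_sub, hy t ht, add_sub_cancel]

theorem exists_tendsto_shift [CompleteSpace X] {M : ℝ} (hM : ∀ t : ℝ, 0 ≤ t → ‖T t‖ ≤ M)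
    (hsac : ∀ x : X, ∀ t : ℕ → ℝ, (∀ n, 0 ≤ t n) → Tendsto t atTop atTop →
      ∃ φ : ℕ → ℕ, StrictMono φ ∧ ∃ y : X, Tendsto (fun n => T (t (φ n)) x) atTop (𝓝 y))
    (hU : (U : Filter ℝ) ≤ atTop) (τ : ℝ) :
    ∃ S : X →L[ℝ] X, ∀ x, Tendsto (fun t => T (t - τ) x) U (𝓝 (S x)) :=
  exists_tendsto_clm_of_eventually_norm_le
    (((eventually_ge_atTop τ).filter_mono hU).mono fun _ ht => hM _ (sub_nonneg.2 ht))
    fun x => exists_tendsto_ultrafilter_of_forall_subseq (a := τ) (fun t hτt ht =>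
      hsac x (fun n => t n - τ) (fun n => sub_nonneg.2 (hτt n))
        (tendsto_atTop_add_const_right _ _ ht)) hU

variable {e : X →L[ℝ] X}

theorem apply_comm_of_tendsto (hT : ∀ s t : ℝ, 0 ≤ s → 0 ≤ t → T (s + t) = (T s).comp (T t))
    (hU : (U : Filter ℝ) ≤ atTop) (he : ∀ x, Tendsto (fun t => T t x) U (𝓝 (e x)))
    {τ : ℝ} (hτ : 0 ≤ τ) (x : X) : T τ (e x) = e (T τ x) :=
  tendsto_nhds_unique (((T τ).continuous.tendsto _).comp (he x)) <|
    (he (T τ x)).congr' <| ((eventually_ge_atTop 0).filter_mono hU).mono fun t ht => by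
      simp only [Function.comp_apply, semigroup_apply_apply hT hτ ht,
        semigroup_apply_apply hT ht hτ, add_comm]

theorem apply_apply_eq_apply_of_tendsto
    (hT : ∀ s t : ℝ, 0 ≤ s → 0 ≤ t → T (s + t) = (T s).comp (T t))
    (hU : (U : Filter ℝ) ≤ atTop) (hUU : U + U = U)
    (he : ∀ x, Tendsto (fun t => T t x) U (𝓝 (e x))) (x : X) : e (e x) = e x := by
  refine tendsto_nhds_unique (he (e x)) (Metric.tendsto_nhds.2 fun ε hε => ?_)
  -- `e x` is the limit of `T (s + t) x` along `U + U = U`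
  have h := Metric.tendsto_nhds.1 (he x) (ε / 2) (half_pos hε)
  rw [← hUU, Ultrafilter.eventually_add] at h
  filter_upwards [h, (eventually_ge_atTop 0).filter_mono hU] with s hs hs0
  have : dist (T s (e x)) (e x) ≤ ε / 2 :=
    le_of_tendsto ((((T s).continuous.tendsto _).comp (he x)).dist tendsto_const_nhds) <|
      (hs.and ((eventually_ge_atTop 0).filter_mono hU)).mono fun t ht => by
        simpa [semigroup_apply_apply hT hs0 ht.2] using ht.1.le
  linarith

theorem shift_apply_of_tendsto (hT : ∀ s t : ℝ, 0 ≤ s → 0 ≤ t → T (s + t) = (T s).comp (T t))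
    (hU : (U : Filter ℝ) ≤ atTop) (he : ∀ x, Tendsto (fun t => T t x) U (𝓝 (e x)))
    {τ : ℝ} (hτ : 0 ≤ τ) {S : X →L[ℝ] X}
    (hS : ∀ x, Tendsto (fun t => T (t - τ) x) U (𝓝 (S x))) (x : X) : S (T τ x) = e x :=
  tendsto_nhds_unique (hS (T τ x)) <| (he x).congr' <|
    ((eventually_ge_atTop τ).filter_mono hU).mono fun t ht => by
      simp only [semigroup_apply_apply hT (sub_nonneg.2 ht) hτ, sub_add_cancel]

theorem tendsto_zero_of_exists_norm_lt
    (hT : ∀ s t : ℝ, 0 ≤ s → 0 ≤ t → T (s + t) = (T s).comp (T t))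
    {M : ℝ} (hM : ∀ t : ℝ, 0 ≤ t → ‖T t‖ ≤ M) {w : X}
    (hw : ∀ ε > 0, ∃ s, 0 ≤ s ∧ ‖T s w‖ < ε) : Tendsto (fun t => T t w) atTop (𝓝 0) := by
  refine Metric.tendsto_nhds.2 fun ε hε => ?_
  obtain ⟨s, hs, hsw⟩ := hw (ε / (|M| + 1)) (by positivity)
  filter_upwards [eventually_ge_atTop s] with t ht
  have h := (T (t - s)).le_of_opNorm_le (hM _ (sub_nonneg.2 ht)) (T s w)
  rw [semigroup_apply_apply hT (sub_nonneg.2 ht) hs, sub_add_cancel] at h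
  rw [lt_div_iff₀ (by positivity)] at hsw
  rw [dist_zero_right]
  nlinarith [le_abs_self M, norm_nonneg (T s w)]

theorem tendsto_apply_sub_apply_zero
    (hT : ∀ s t : ℝ, 0 ≤ s → 0 ≤ t → T (s + t) = (T s).comp (T t))
    {M : ℝ} (hM : ∀ t : ℝ, 0 ≤ t → ‖T t‖ ≤ M) (hU : (U : Filter ℝ) ≤ atTop)
    (he : ∀ x, Tendsto (fun t => T t x) U (𝓝 (e x))) (he_idem : ∀ x, e (e x) = e x) (x : X) :
    Tendsto (fun t => T t (x - e x)) atTop (𝓝 0) := by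
  have h0 : Tendsto (fun t => T t (x - e x)) U (𝓝 0) := by simpa [he_idem] using he (x - e x)
  refine tendsto_zero_of_exists_norm_lt hT hM fun ε hε => ?_
  exact ((h0.eventually (Metric.ball_mem_nhds 0 hε)).and
    ((eventually_ge_atTop 0).filter_mono hU)).exists.imp fun s hs => ⟨hs.2, by simpa using hs.1⟩

theorem apply_eq_self_of_eq_smul (hT : ∀ s t : ℝ, 0 ≤ s → 0 ≤ t → T (s + t) = (T s).comp (T t))
    {M : ℝ} (hM : ∀ t : ℝ, 0 ≤ t → ‖T t‖ ≤ M) (hU : (U : Filter ℝ) ≤ atTop)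
    (he : ∀ x, Tendsto (fun t => T t x) U (𝓝 (e x))) {u : X} {y' : X →L[ℝ] ℝ}
    (hey' : ∀ x, e x = y' x • u) (heu : e u = u) (hu0 : u ≠ 0)
    (hy' : ∀ t, 0 ≤ t → 0 ≤ y' (T t u)) {t : ℝ} (ht : 0 ≤ t) : T t u = u := by
  have hy'u : y' u = 1 := smul_left_injective ℝ hu0 (by simpa [← hey'] using heu)
  have hr {t : ℝ} (ht : 0 ≤ t) : T t u = y' (T t u) • u := by
    rw [← hey', ← apply_comm_of_tendsto hT hU he ht, heu]
  suffices y' (T t u) = 1 by rw [hr ht, this, one_smul]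
  refine eq_one_of_map_add_eq_mul (r := fun t => y' (T t u)) (fun s t hs ht => ?_) hy'
    (M := M) (fun t ht => ?_) ?_ ht
  · have h : T s (T t u) = (y' (T t u) * y' (T s u)) • u := by
      conv_lhs => rw [hr ht, map_smul, hr hs]
      rw [smul_smul]
    refine smul_left_injective ℝ hu0 ?_
    simp only
    rw [← hr (add_nonneg hs ht), ← semigroup_apply_apply hT hs ht, h, mul_comm]
  · have := (T t).le_of_opNorm_le (hM t ht) u
    rw [hr ht, norm_smul, Real.norm_of_nonneg (hy' t ht)] at this
    exact le_of_mul_le_mul_right this (norm_pos_iff.2 hu0)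
  · have := ((y'.continuous.tendsto _).comp (he u)).mapClusterPt
    rw [heu, hy'u] at this
    exact ClusterPt.mono this (map_mono hU)

end Semigroup

section AlmostInterior

variable {X : Type*} [NormedAddCommGroup X] [NormedSpace ℝ X] {C : Set X}

def IsAlmostInteriorPoint (C : Set X) (x : X) : Prop :=
  ∀ x' : X →L[ℝ] ℝ, (∀ z ∈ C, 0 ≤ x' z) → x' ≠ 0 → 0 < x' x

theorem IsAlmostInteriorPoint.eq_zero_of_forall_mem {u : X} (hu : IsAlmostInteriorPoint C u)
    (huC : u ∈ C) {F : Type*} [NormedAddCommGroup F] [NormedSpace ℝ F] {g : X →L[ℝ] F}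
    (hg : ∀ c ∈ C, g c = 0) : g = 0 := by
  by_contra hg0
  obtain ⟨x, hx⟩ : ∃ x, g x ≠ 0 := by
    by_contra! h
    exact hg0 (ContinuousLinearMap.ext h)
  obtain ⟨h, -, hh⟩ := exists_dual_vector ℝ (g x) (norm_ne_zero_iff.2 hx)
  have hhg : h.comp g ≠ 0 := fun h0 => hx (by simpa [hh] using congr($h0 x))
  simpa [hg u huC] using hu (h.comp g) (fun z hz => by simp [hg z hz]) hhg

theorem IsAlmostInteriorPoint.of_apply {R A e : X →L[ℝ] X} (hR : ∀ z ∈ C, R z ∈ C)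
    (hRA : ∀ z, R (A z) = e z) {u v : X} (hu : IsAlmostInteriorPoint C u) (heu : e u = u)
    (hAv : IsAlmostInteriorPoint C (A v)) (hev : e v = v) : IsAlmostInteriorPoint C v := by
  intro x' hx' hx'0
  have hx'R : x'.comp R ≠ 0 := fun h0 =>
    (hu x' hx' hx'0).ne' (by rw [← heu, ← hRA]; simpa using congr($h0 (A u)))
  simpa [hRA, hev] using hAv (x'.comp R) (fun z hz => hx' _ (hR z hz)) hx'R

theorem noProperExposedFace_of_isAlmostInteriorPoint {e : X →L[ℝ] X} (he : ∀ z ∈ C, e z ∈ C)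
    (he_idem : ∀ z, e (e z) = e z)
    (h : ∀ v ∈ C, e v = v → v ≠ 0 → IsAlmostInteriorPoint C v) :
    NoProperExposedFace {v | v ∈ C ∧ e v = v} := by
  intro φ hφ v hv hv0 hφv z hz
  by_contra hφz
  have := h v hv.1 hv.2 hv0 (φ.comp e) (fun c hc => hφ _ ⟨he c hc, he_idem c⟩)
    fun h0 => hφz (by simpa [hz.2] using congr($h0 z))
  simp [hv.2, hφv] at this

theorem nonneg_of_smul_mem
    (hC : ∀ a b : ℝ, 0 ≤ a → 0 ≤ b → ∀ x ∈ C, ∀ y ∈ C, a • x + b • y ∈ C)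
    (hCp : ∀ x ∈ C, -x ∈ C → x = 0) {u : X} (huC : u ∈ C) (hu0 : u ≠ 0) {r : ℝ}
    (hr : r • u ∈ C) : 0 ≤ r := by
  by_contra! h
  have := hCp _ hr (by simpa using hC (-r) 0 (by linarith) le_rfl u huC u huC)
  exact h.ne (by simpa [hu0] using this)

theorem exists_eq_smul_of_forall_isAlmostInteriorPoint [CompleteSpace X] (hCc : IsClosed C)
    (hC : ∀ a b : ℝ, 0 ≤ a → 0 ≤ b → ∀ x ∈ C, ∀ y ∈ C, a • x + b • y ∈ C)
    (hCp : ∀ x ∈ C, -x ∈ C → x = 0) {e : X →L[ℝ] X} (he : ∀ z ∈ C, e z ∈ C)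
    (he_idem : ∀ z, e (e z) = e z) (h : ∀ v ∈ C, e v = v → v ≠ 0 → IsAlmostInteriorPoint C v)
    {u : X} (huC : u ∈ C) (heu : e u = u) (hu0 : u ≠ 0) :
    ∃ y' : X →L[ℝ] ℝ, ∀ x, e x = y' x • u := by
  have hray (c : X) (hc : c ∈ C) : ∃ r : ℝ, e c = r • u :=
    exists_eq_smul_of_noProperExposedFace (D := {v | v ∈ C ∧ e v = v})
      (hCc.inter (isClosed_eq e.continuous continuous_id))
      (fun a b ha hb x hx y hy => ⟨hC a b ha hb x hx.1 y hy.1, by simp [hx.2, hy.2]⟩)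
      (fun x hx hx' => hCp x hx.1 hx'.1)
      (noProperExposedFace_of_isAlmostInteriorPoint he he_idem h)
      ⟨huC, heu⟩ hu0 ⟨he c hc, he_idem c⟩
  obtain ⟨ℓ, -, hℓ⟩ := exists_dual_vector ℝ u (norm_ne_zero_iff.2 hu0)
  set y' := (‖u‖⁻¹ • ℓ).comp e
  refine ⟨y', fun x => ?_⟩
  have := (h u huC heu hu0).eq_zero_of_forall_mem huC (g := e - y'.smulRight u) fun c hc => by
    obtain ⟨r, hr⟩ := hray c hc
    simp [y', hr, hℓ, mul_comm r, hu0]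
  simpa [sub_eq_zero] using congr($this x)

theorem comp_eq_of_eq_smul {e A : X →L[ℝ] X} {y' : X →L[ℝ] ℝ} {u : X}
    (hey' : ∀ x, e x = y' x • u) (hu0 : u ≠ 0) (hA : ∀ x, e (A x) = e x) : y'.comp A = y' := by
  ext x
  exact smul_left_injective ℝ hu0 (by simpa [hey'] using hA x)

theorem exists_fixed_forall_isAlmostInteriorPoint {T S : ℝ → X →L[ℝ] X} {e : X →L[ℝ] X}
    (hne : C.Nonempty) (hCnz : C ≠ {0}) (hTpos : ∀ t : ℝ, 0 ≤ t → ∀ x ∈ C, T t x ∈ C)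
    (hstrpos : ∀ x ∈ C, x ≠ 0 → ∃ τ : ℝ, 0 ≤ τ ∧ IsAlmostInteriorPoint C (T τ x))
    (hS : ∀ τ, ∀ z ∈ C, S τ z ∈ C) (hST : ∀ τ, 0 ≤ τ → ∀ x, S τ (T τ x) = e x)
    (he : ∀ z ∈ C, e z ∈ C) (he_idem : ∀ x, e (e x) = e x)
    (hcomm : ∀ τ, 0 ≤ τ → ∀ x, T τ (e x) = e (T τ x)) (he0 : e ≠ 0) :
    ∃ u ∈ C, e u = u ∧ u ≠ 0 ∧ ∀ v ∈ C, e v = v → v ≠ 0 → IsAlmostInteriorPoint C v := by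
  obtain ⟨c, hcC, hc0⟩ : ∃ c ∈ C, c ≠ 0 := by
    by_contra! h
    exact hCnz (hne.subset_singleton_iff.1 fun c hc => h c hc)
  obtain ⟨τ, hτ, hc⟩ := hstrpos c hcC hc0
  obtain ⟨c₀, hc₀C, hc₀⟩ : ∃ c₀ ∈ C, e c₀ ≠ 0 := by
    by_contra! h
    exact he0 (hc.eq_zero_of_forall_mem (hTpos τ hτ c hcC) h)
  obtain ⟨τ₀, hτ₀, hu⟩ := hstrpos (e c₀) (he c₀ hc₀C) hc₀
  have heu : e (T τ₀ (e c₀)) = T τ₀ (e c₀) := by rw [← hcomm τ₀ hτ₀, he_idem]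
  refine ⟨T τ₀ (e c₀), hTpos τ₀ hτ₀ _ (he c₀ hc₀C), heu, fun h => hc₀ ?_,
    fun v hvC hev hv0 => ?_⟩
  · rw [← he_idem, ← hST τ₀ hτ₀, h, map_zero]
  · obtain ⟨τ, hτ, hvτ⟩ := hstrpos v hvC hv0
    exact IsAlmostInteriorPoint.of_apply (hS τ) (hST τ hτ) hu heu hvτ hev

end AlmostInterior

theorem strong_convergence_of_strongly_positive_semigroup_general
    {X : Type*} [NormedAddCommGroup X] [NormedSpace ℝ X] [CompleteSpace X]
    (C : Set X) (hne : C.Nonempty) (hclosed : IsClosed C)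
    (hcone : ∀ (a b : ℝ), 0 ≤ a → 0 ≤ b → ∀ x ∈ C, ∀ y ∈ C, a • x + b • y ∈ C)
    (hpointed : ∀ x ∈ C, -x ∈ C → x = 0)
    (hCnz : C ≠ {0})
    (T : ℝ → (X →L[ℝ] X))
    (hTsg : ∀ s t : ℝ, 0 ≤ s → 0 ≤ t → T (s + t) = (T s).comp (T t))
    (hTpos : ∀ t : ℝ, 0 ≤ t → ∀ x ∈ C, T t x ∈ C)
    (hstrpos : ∀ x ∈ C, x ≠ 0 → ∃ tx : ℝ, 0 ≤ tx ∧
      ∀ x' : X →L[ℝ] ℝ, (∀ z ∈ C, 0 ≤ x' z) → x' ≠ 0 → 0 < x' (T tx x))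
    (hbdd : ∃ M : ℝ, ∀ t : ℝ, 0 ≤ t → ‖T t‖ ≤ M)
    (hsac : ∀ x : X, ∀ t : ℕ → ℝ, (∀ n, 0 ≤ t n) → Tendsto t atTop atTop →
      ∃ φ : ℕ → ℕ, StrictMono φ ∧ ∃ y : X,
        Tendsto (fun n => T (t (φ n)) x) atTop (nhds y)) :
    ∃ Q : X →L[ℝ] X,
      (∀ x : X, Tendsto (fun t : ℝ => T t x) atTop (nhds (Q x))) ∧
      (Q ≠ 0 →
        ∃ (y : X) (y' : X →L[ℝ] ℝ),
          (y ∈ C ∧ (∀ x' : X →L[ℝ] ℝ, (∀ z ∈ C, 0 ≤ x' z) → x' ≠ 0 → 0 < x' y) ∧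
            ∀ t : ℝ, 0 ≤ t → T t y = y) ∧
          ((∀ z ∈ C, z ≠ 0 → 0 < y' z) ∧ ∀ t : ℝ, 0 ≤ t → y'.comp (T t) = y') ∧
          (∀ z : X, Q z = y' z • y)) := by
  obtain ⟨M, hM⟩ := hbdd
  obtain ⟨U, hU, hUU⟩ := exists_idempotent_ultrafilter_le_atTop (G := ℝ)
  choose S hS using exists_tendsto_shift hM hsac hU
  have he : ∀ x, Tendsto (fun t => T t x) U (𝓝 (S 0 x)) := by simpa using hS 0
  set e := S 0
  have hS_pos (τ : ℝ) (z : X) (hz : z ∈ C) : S τ z ∈ C := hclosed.mem_of_tendsto (hS τ z) <|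
    ((eventually_ge_atTop τ).filter_mono hU).mono fun t ht => hTpos _ (sub_nonneg.2 ht) z hz
  have he_idem := apply_apply_eq_apply_of_tendsto hTsg hU hUU he
  have hflight := tendsto_apply_sub_apply_zero hTsg hM hU he he_idem
  by_cases he0 : e = 0
  · exact ⟨e, fun x => by simpa [he0] using hflight x, fun h => absurd he0 h⟩
  obtain ⟨u, huC, heu, hu0, hfixed⟩ := exists_fixed_forall_isAlmostInteriorPoint hne hCnz hTpos
    hstrpos hS_pos (fun τ hτ => shift_apply_of_tendsto hTsg hU he hτ (hS τ)) (hS_pos 0) he_idem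
    (fun τ hτ => apply_comm_of_tendsto hTsg hU he hτ) he0
  obtain ⟨y', hey'⟩ := exists_eq_smul_of_forall_isAlmostInteriorPoint hclosed hcone hpointed
    (hS_pos 0) he_idem hfixed huC heu hu0
  have hy'pos (z : X) (hz : z ∈ C) : 0 ≤ y' z :=
    nonneg_of_smul_mem hcone hpointed huC hu0 (hey' z ▸ hS_pos 0 z hz)
  have hTu (t : ℝ) (ht : 0 ≤ t) : T t u = u := apply_eq_self_of_eq_smul hTsg hM hU he hey' heu
    hu0 (fun t ht => hy'pos _ (hTpos t ht u huC)) ht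
  have hTe (t : ℝ) (ht : 0 ≤ t) (x : X) : T t (e x) = e x := by rw [hey', map_smul, hTu t ht]
  have hy'T (t : ℝ) (ht : 0 ≤ t) : y'.comp (T t) = y' := comp_eq_of_eq_smul hey' hu0 fun x =>
    (apply_comm_of_tendsto hTsg hU he ht x).symm.trans (hTe t ht x)
  refine ⟨e, fun x => tendsto_apply_of_tendsto_apply_sub (fun t ht => hTe t ht x) (hflight x),
    fun _ => ⟨u, y', ⟨huC, hfixed u huC heu hu0, hTu⟩, ⟨fun z hz hz0 => ?_, hy'T⟩, hey'⟩⟩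
  obtain ⟨τ, hτ, hzτ⟩ := hstrpos z hz hz0
  have hy'0 : y' ≠ 0 := fun h => hu0 (by simpa [h] using heu.symm.trans (hey' u))
  simpa [← ContinuousLinearMap.comp_apply, hy'T τ hτ] using hzτ y' hy'pos hy'0

/-- Strong convergence of strongly positive semigroups. Let
`(T_t)_{t ∈ [0,∞)}` be a positive operator semigroup on an ordered Banach space with
nonzero cone such that (a) the orbit of every nonzero positive vector reaches an almost
interior point of the cone, and (b) the semigroup is bounded and strongly asymptotically
compact. Then `T_t` converges strongly to some operator `Q` as `t → ∞`; if `Q ≠ 0`, then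
`Q = y' ⊗ y` for an almost interior point `y` of the cone fixed by the semigroup and a
strictly positive functional `y'` fixed by the adjoint semigroup. -/
theorem strong_convergence_of_strongly_positive_semigroup
    {X : Type*} [NormedAddCommGroup X] [NormedSpace ℝ X] [CompleteSpace X]
    (C : Set X) (hne : C.Nonempty) (hclosed : IsClosed C)
    (hcone : ∀ (a b : ℝ), 0 ≤ a → 0 ≤ b → ∀ x ∈ C, ∀ y ∈ C, a • x + b • y ∈ C)
    (hpointed : ∀ x ∈ C, -x ∈ C → x = 0)
    (hCnz : C ≠ {0})
    (T : ℝ → (X →L[ℝ] X))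
    (hT0 : T 0 = ContinuousLinearMap.id ℝ X)
    (hTsg : ∀ s t : ℝ, 0 ≤ s → 0 ≤ t → T (s + t) = (T s).comp (T t))
    (hTpos : ∀ t : ℝ, 0 ≤ t → ∀ x ∈ C, T t x ∈ C)
    (hstrpos : ∀ x ∈ C, x ≠ 0 → ∃ tx : ℝ, 0 ≤ tx ∧
      ∀ x' : X →L[ℝ] ℝ, (∀ z ∈ C, 0 ≤ x' z) → x' ≠ 0 → 0 < x' (T tx x))
    (hbdd : ∃ M : ℝ, ∀ t : ℝ, 0 ≤ t → ‖T t‖ ≤ M)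
    (hsac : ∀ x : X, ∀ t : ℕ → ℝ, (∀ n, 0 ≤ t n) → Tendsto t atTop atTop →
      ∃ φ : ℕ → ℕ, StrictMono φ ∧ ∃ y : X,
        Tendsto (fun n => T (t (φ n)) x) atTop (nhds y)) :
    ∃ Q : X →L[ℝ] X,
      (∀ x : X, Tendsto (fun t : ℝ => T t x) atTop (nhds (Q x))) ∧
      (Q ≠ 0 →
        ∃ (y : X) (y' : X →L[ℝ] ℝ),
          (y ∈ C ∧ (∀ x' : X →L[ℝ] ℝ, (∀ z ∈ C, 0 ≤ x' z) → x' ≠ 0 → 0 < x' y) ∧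
            ∀ t : ℝ, 0 ≤ t → T t y = y) ∧
          ((∀ z ∈ C, z ≠ 0 → 0 < y' z) ∧ ∀ t : ℝ, 0 ≤ t → y'.comp (T t) = y') ∧
          (∀ z : X, Q z = y' z • y)) :=
  strong_convergence_of_strongly_positive_semigroup_general C hne hclosed hcone hpointed hCnz T hTsg
    hTpos hstrpos hbdd hsac
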